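/- arXiv:2006.03137 — 2 statements merged into one kernel-verified Lean document; each statement's English description precedes it below -/
import Mathlib

section
/- Let 0 ≤ t < 1. The left (Harte) spectra of T and Δ_t(T) coincide: for every λ = (λ_1, …, λ_d) ∈ ℂ^d, the tuple T − λ = (T_1 − λ_1 I, …, T_d − λ_d I) is left invertible if and only if the tuple Δ_t(T) − λ = (P^t V_1 P^{1−t} − λ_1 I, …, P^t V_d P^{1−t} − λ_d I) is left invertible. -/
/-!
In a Hilbert space a tuple `S` is left invertible iff it is jointly bounded below, i.e.
`‖x‖ ≲ maxᵢ ‖Sᵢ x‖`. Put `Bⱼ = Vⱼ P^(1-t)`, so that `Tᵢ = Bᵢ P^t` and `Δᵢ = P^t Bᵢ`. Then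
`Δᵢ P^t = P^t Tᵢ`, and commutativity of `T` gives `Tᵢ Bⱼ = Bⱼ Δᵢ`. When some `λⱼ ≠ 0`, each of
these intertwinings transfers joint boundedness below from one of `T - λ`, `Δ - λ` to the other,
because `λⱼ x` is recovered from `Δⱼ x = P^t (Bⱼ x)`, resp. from `Tⱼ x = Bⱼ (P^t x)`.
When `P` is invertible, `Δₜ(T) = P^t T P^(-t)` is similar to `T`. Finally, for `λ = 0` and `P` not
invertible neither tuple is left invertible: `∑ Tᵢ* Tᵢ = P²`, and `P^(1-t)` is a right factor of
every `Δᵢ`.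
-/

open scoped InnerProductSpace

section Ring

variable {R : Type*} [Ring R] {ι : Type*} [Fintype ι]

def IsLeftInvertible (S : ι → R) : Prop :=
  ∃ A : ι → R, ∑ i, A i * S i = 1

lemma IsLeftInvertible.conj {S : ι → R} (h : IsLeftInvertible S) (u : Rˣ) :
    IsLeftInvertible fun i => u * S i * ↑u⁻¹ := by
  obtain ⟨A, hA⟩ := h
  refine ⟨fun i => u * A i * ↑u⁻¹, ?_⟩
  calc ∑ i, u * A i * ↑u⁻¹ * (u * S i * ↑u⁻¹) = u * (∑ i, A i * S i) * ↑u⁻¹ := by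
        simp only [Finset.mul_sum, Finset.sum_mul, mul_assoc, Units.inv_mul_cancel_left]
    _ = 1 := by simp [hA]

lemma isLeftInvertible_conj_sub_smul_iff {𝕜 : Type*} [CommSemiring 𝕜] [Algebra 𝕜 R]
    (u : Rˣ) (S : ι → R) (lam : ι → 𝕜) :
    IsLeftInvertible (fun i => u * S i * ↑u⁻¹ - lam i • 1) ↔
      IsLeftInvertible (fun i => S i - lam i • 1) := by
  have hconj : ∀ i, (u * S i * ↑u⁻¹ - lam i • 1 : R) = u * (S i - lam i • 1) * ↑u⁻¹ := fun i => by
    simp [mul_sub, sub_mul]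
  simp only [hconj]
  refine ⟨fun h => ?_, fun h => h.conj u⟩
  simpa [mul_assoc] using h.conj u⁻¹

lemma isLeftInvertible_of_isUnit_sum_star_mul_self [StarRing R] {S : ι → R}
    (h : IsUnit (∑ i, star (S i) * S i)) : IsLeftInvertible S :=
  ⟨fun i => ↑h.unit⁻¹ * star (S i), by simp [mul_assoc, ← Finset.mul_sum]⟩

lemma IsSelfAdjoint.isUnit_of_mul_eq_one [StarRing R] {a b : R} (ha : IsSelfAdjoint a)
    (h : b * a = 1) : IsUnit a :=
  isUnit_iff_exists_and_exists.mpr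
    ⟨⟨star b, by simpa [ha.star_eq] using congr_arg star h⟩, ⟨b, h⟩⟩

end Ring

lemma pi_norm_sq_le_sum_sq {ι E : Type*} [Fintype ι] [SeminormedAddCommGroup E]
    (v : ι → E) : ‖v‖ ^ 2 ≤ ∑ i, ‖v i‖ ^ 2 := by
  have hsum : 0 ≤ ∑ i, ‖v i‖ ^ 2 := by positivity
  have hv : ‖v‖ ≤ √(∑ i, ‖v i‖ ^ 2) :=
    (pi_norm_le_iff_of_nonneg (Real.sqrt_nonneg _)).mpr fun i =>
      Real.le_sqrt_of_sq_le
        (Finset.single_le_sum (fun j _ => sq_nonneg ‖v j‖) (Finset.mem_univ i))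
  calc ‖v‖ ^ 2 ≤ √(∑ i, ‖v i‖ ^ 2) ^ 2 := by gcongr
    _ = ∑ i, ‖v i‖ ^ 2 := Real.sq_sqrt hsum

section Normed

variable {𝕜 E F : Type*} [NontriviallyNormedField 𝕜] [NormedAddCommGroup E] [NormedSpace 𝕜 E]
  [NormedAddCommGroup F] [NormedSpace 𝕜 F] {ι : Type*} [Fintype ι]

def JointlyBoundedBelow (S : ι → E →L[𝕜] F) : Prop :=
  ∃ c > 0, ∀ x, c * ‖x‖ ≤ ‖fun i => S i x‖

lemma IsLeftInvertible.jointlyBoundedBelow {S : ι → E →L[𝕜] E} (h : IsLeftInvertible S) :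
    JointlyBoundedBelow S := by
  obtain ⟨A, hA⟩ := h
  refine ⟨(∑ i, ‖A i‖ + 1)⁻¹, by positivity, fun x => ?_⟩
  rw [inv_mul_le_iff₀ (by positivity)]
  calc ‖x‖ = ‖∑ i, A i (S i x)‖ := by
        simpa using congr_arg norm (DFunLike.congr_fun hA x).symm
    _ ≤ ∑ i, ‖A i‖ * ‖fun i => S i x‖ := by
        refine (norm_sum_le _ _).trans (Finset.sum_le_sum fun i _ => ?_)
        exact (A i).le_opNorm_of_le (norm_le_pi_norm (fun i => S i x) i)
    _ ≤ (∑ i, ‖A i‖ + 1) * ‖fun i => S i x‖ := by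
        rw [← Finset.sum_mul]; gcongr; linarith

/-- `X x` is controlled by `(R - λ) x`, and then so is `λ j • x = Y (X x) - (R j - λ j) x`. -/
lemma JointlyBoundedBelow.of_intertwining {S : ι → F →L[𝕜] F} {R : ι → E →L[𝕜] E}
    {X : E →L[𝕜] F} {Y : F →L[𝕜] E} {lam : ι → 𝕜} {j : ι}
    (hS : JointlyBoundedBelow fun i => S i - lam i • 1) (hSX : ∀ i, S i ∘L X = X ∘L R i)
    (hR : R j = Y ∘L X) (hj : lam j ≠ 0) :
    JointlyBoundedBelow fun i => R i - lam i • 1 := by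
  obtain ⟨c, hc, hS⟩ := hS
  have hX : ∀ x, c * ‖X x‖ ≤ ‖X‖ * ‖fun i => (R i - lam i • 1) x‖ := by
    intro x
    have hSX' : ∀ i, (S i - lam i • 1) (X x) = X ((R i - lam i • 1) x) := by
      intro i
      simpa using DFunLike.congr_fun (hSX i) x
    calc c * ‖X x‖ ≤ ‖fun i => (S i - lam i • 1) (X x)‖ := hS (X x)
      _ ≤ ‖X‖ * ‖fun i => (R i - lam i • 1) x‖ := by
          refine (pi_norm_le_iff_of_nonneg (by positivity)).mpr fun i => ?_
          rw [hSX']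
          exact X.le_opNorm_of_le (norm_le_pi_norm (fun i => (R i - lam i • 1) x) i)
  refine ⟨c * ‖lam j‖ / (‖Y‖ * ‖X‖ + c), by positivity, fun x => ?_⟩
  set v := fun i => (R i - lam i • 1) x
  have hx : lam j • x = Y (X x) - v j := by simp [v, hR]
  rw [div_mul_eq_mul_div, div_le_iff₀ (by positivity)]
  calc c * ‖lam j‖ * ‖x‖ = c * ‖Y (X x) - v j‖ := by rw [← hx, norm_smul, mul_assoc]
    _ ≤ c * (‖Y‖ * ‖X x‖ + ‖v‖) := by
        gcongr
        exact (norm_sub_le _ _).trans (add_le_add (Y.le_opNorm _) (norm_le_pi_norm v j))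
    _ = ‖Y‖ * (c * ‖X x‖) + c * ‖v‖ := by ring
    _ ≤ ‖Y‖ * (‖X‖ * ‖v‖) + c * ‖v‖ := by grw [hX x]
    _ = ‖v‖ * (‖Y‖ * ‖X‖ + c) := by ring

end Normed

section Hilbert

variable {𝕜 H : Type*} [RCLike 𝕜] [NormedAddCommGroup H] [InnerProductSpace 𝕜 H]
  [CompleteSpace H] {ι : Type*} [Fintype ι]

lemma re_inner_sum_star_mul_self_apply (S : ι → H →L[𝕜] H) (x : H) :
    RCLike.re ⟪(∑ i, star (S i) * S i) x, x⟫_𝕜 = ∑ i, ‖S i x‖ ^ 2 := by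
  simp [sum_inner, ContinuousLinearMap.apply_norm_sq_eq_inner_adjoint_left,
    ContinuousLinearMap.star_eq_adjoint]

lemma JointlyBoundedBelow.isUnit_sum_star_mul_self {S : ι → H →L[𝕜] H}
    (h : JointlyBoundedBelow S) : IsUnit (∑ i, star (S i) * S i) := by
  obtain ⟨c, hc, hS⟩ := h
  refine ContinuousLinearMap.isUnit_of_forall_le_norm_inner_map _ (c := ⟨c ^ 2, by positivity⟩)
    (NNReal.coe_pos.mp (pow_pos hc 2)) fun x => ?_
  calc ‖x‖ ^ 2 * c ^ 2 = (c * ‖x‖) ^ 2 := by ring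
    _ ≤ ‖fun i => S i x‖ ^ 2 := by grw [hS x]
    _ ≤ ∑ i, ‖S i x‖ ^ 2 := pi_norm_sq_le_sum_sq _
    _ = RCLike.re ⟪(∑ i, star (S i) * S i) x, x⟫_𝕜 :=
        (re_inner_sum_star_mul_self_apply S x).symm
    _ ≤ ‖⟪(∑ i, star (S i) * S i) x, x⟫_𝕜‖ := RCLike.re_le_norm _

lemma isLeftInvertible_iff_jointlyBoundedBelow {S : ι → H →L[𝕜] H} :
    IsLeftInvertible S ↔ JointlyBoundedBelow S :=
  ⟨IsLeftInvertible.jointlyBoundedBelow, fun h =>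
    isLeftInvertible_of_isUnit_sum_star_mul_self h.isUnit_sum_star_mul_self⟩

lemma IsLeftInvertible.isUnit_sum_star_mul_self {S : ι → H →L[𝕜] H} (h : IsLeftInvertible S) :
    IsUnit (∑ i, star (S i) * S i) :=
  h.jointlyBoundedBelow.isUnit_sum_star_mul_self

end Hilbert

section Rpow

variable {A : Type*} [CStarAlgebra A] [PartialOrder A] [StarOrderedRing A]

lemma CFC.rpow_add_of_nonneg (a : A) {x y : ℝ} (hx : 0 ≤ x) (hy : 0 ≤ y)
    (hxy : x + y ≠ 0) : a ^ (x + y) = a ^ x * a ^ y := by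
  simp only [CFC.rpow_def]
  rw [← cfc_mul (fun z : NNReal => z ^ x) (fun z : NNReal => z ^ y) a
    (NNReal.continuousOn_rpow_const (.inr hx)) (NNReal.continuousOn_rpow_const (.inr hy))]
  exact cfc_congr fun z _ => NNReal.rpow_add' hxy z

lemma CFC.rpow_one_sub_mul_rpow {a : A} (ha : 0 ≤ a) {t : ℝ} (ht0 : 0 ≤ t) (ht1 : t ≤ 1) :
    a ^ (1 - t) * a ^ t = a := by
  rw [← CFC.rpow_add_of_nonneg a (by linarith) ht0 (by norm_num), sub_add_cancel,
    CFC.rpow_one a]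

/-- `(b * a ^ r) * star (b * a ^ r) = b * a ^ (2 * r) * star b`, so by the C⋆-identity
`b * a ^ (2 * r) = 0` forces `b * a ^ r = 0`; finitely many halvings of the exponent `1` reach
below any `s > 0`. -/
lemma mul_rpow_eq_zero_of_mul_eq_zero {a b : A} (ha : 0 ≤ a) (h : b * a = 0) {s : ℝ}
    (hs : 0 < s) : b * a ^ s = 0 := by
  have halve : ∀ r : ℝ, 0 < r → b * a ^ (2 * r) = 0 → b * a ^ r = 0 := by
    intro r hr h2r
    rw [← CStarRing.mul_star_self_eq_zero_iff, star_mul, CFC.rpow_nonneg.isSelfAdjoint.star_eq,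
      mul_assoc, ← mul_assoc (a ^ r), ← CFC.rpow_add_of_nonneg a hr.le hr.le (by positivity),
      ← two_mul, ← mul_assoc, h2r, zero_mul]
  have dyadic : ∀ n : ℕ, b * a ^ ((1 / 2 : ℝ) ^ n) = 0 := by
    intro n
    induction n with
    | zero => simpa [CFC.rpow_one a ha] using h
    | succ n ih => exact halve _ (by positivity) (by convert ih using 3; ring)
  obtain ⟨n, hn⟩ := exists_pow_lt_of_lt_one hs (by norm_num : (1 / 2 : ℝ) < 1)
  have hsplit : s = (1 / 2 : ℝ) ^ n + (s - (1 / 2 : ℝ) ^ n) := by ring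
  rw [hsplit, CFC.rpow_add_of_nonneg a (by positivity) (by linarith) (by linarith), ← mul_assoc,
    dyadic n, zero_mul]

end Rpow

section SphericalAluthge

variable {A : Type*} [CStarAlgebra A] [PartialOrder A] [StarOrderedRing A] {ι : Type*}
  {T V : ι → A} {P : A} {t : ℝ}

/-- The generalized spherical Aluthge transform `Δₜ(T)` of `T = (Vᵢ P)ᵢ`. -/
noncomputable def sphericalAluthge (V : ι → A) (P : A) (t : ℝ) (i : ι) : A :=
  P ^ t * V i * P ^ (1 - t)

lemma eq_mul_rpow_one_sub_mul_rpow (hP : 0 ≤ P) (hpolar : ∀ i, T i = V i * P) (ht0 : 0 ≤ t)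
    (ht1 : t ≤ 1) (i : ι) : T i = V i * P ^ (1 - t) * P ^ t := by
  rw [hpolar i, mul_assoc, CFC.rpow_one_sub_mul_rpow hP ht0 ht1]

lemma sphericalAluthge_mul_rpow (hP : 0 ≤ P) (hpolar : ∀ i, T i = V i * P) (ht0 : 0 ≤ t)
    (ht1 : t ≤ 1) (i : ι) : sphericalAluthge V P t i * P ^ t = P ^ t * T i := by
  rw [eq_mul_rpow_one_sub_mul_rpow hP hpolar ht0 ht1 i, sphericalAluthge]
  simp only [mul_assoc]

/-- `Tᵢ Vⱼ - Tⱼ Vᵢ` vanishes on the range of `P` because the `Tᵢ` commute, hence also on the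
range of `P ^ (1 - t)`. -/
lemma mul_mul_rpow_eq_mul_rpow_mul_sphericalAluthge (hP : 0 ≤ P)
    (hcomm : ∀ i j, T i * T j = T j * T i) (hpolar : ∀ i, T i = V i * P) (ht0 : 0 ≤ t)
    (ht1 : t < 1) (i j : ι) :
    T i * (V j * P ^ (1 - t)) = V j * P ^ (1 - t) * sphericalAluthge V P t i := by
  have hker : (T i * V j - T j * V i) * P = 0 := by
    rw [sub_mul, mul_assoc, mul_assoc, ← hpolar, ← hpolar, hcomm, sub_self]
  have h := mul_rpow_eq_zero_of_mul_eq_zero hP hker (s := 1 - t) (by linarith)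
  rw [sub_mul, sub_eq_zero] at h
  rw [← mul_assoc, h, eq_mul_rpow_one_sub_mul_rpow hP hpolar ht0 ht1.le j, sphericalAluthge]
  simp only [mul_assoc]

lemma exists_sphericalAluthge_eq_conj (hP : 0 ≤ P) (hPu : IsUnit P)
    (hpolar : ∀ i, T i = V i * P) (t : ℝ) :
    ∃ u : Aˣ, ∀ i, sphericalAluthge V P t i = u * T i * ↑u⁻¹ := by
  have hPt : IsStrictlyPositive P := IsStrictlyPositive.iff_of_unital.mpr ⟨hP, hPu⟩
  refine ⟨⟨P ^ t, P ^ (-t), CFC.rpow_mul_rpow_neg t, CFC.rpow_neg_mul_rpow t⟩, fun i => ?_⟩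
  rw [sphericalAluthge, sub_eq_add_neg, CFC.rpow_add hPu, CFC.rpow_one P, hpolar i]
  simp only [Units.inv_mk, mul_assoc]

lemma isUnit_of_isLeftInvertible_sphericalAluthge [Fintype ι] (hP : 0 ≤ P) (ht1 : t < 1)
    (h : IsLeftInvertible (sphericalAluthge V P t)) : IsUnit P := by
  obtain ⟨B, hB⟩ := h
  rw [← CFC.isUnit_rpow_iff P (1 - t) (by linarith)]
  refine CFC.rpow_nonneg.isSelfAdjoint.isUnit_of_mul_eq_one (b := ∑ i, B i * (P ^ t * V i)) ?_
  simpa [sphericalAluthge, Finset.sum_mul, mul_assoc] using hB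

end SphericalAluthge

theorem left_spectrum_of_spherical_aluthge_general
    {H : Type*} [NormedAddCommGroup H] [InnerProductSpace ℂ H] [CompleteSpace H]
    {d : ℕ} (T V : Fin d → H →L[ℂ] H) (P : H →L[ℂ] H)
    (hcomm : ∀ i j, T i * T j = T j * T i)
    (hPpos : 0 ≤ P)
    (hP2 : P * P = ∑ i, star (T i) * T i)
    (hpolar : ∀ i, T i = V i * P)
    (t : ℝ) (ht0 : 0 ≤ t) (ht1 : t < 1) (lam : Fin d → ℂ) :
    (∃ A : Fin d → H →L[ℂ] H, ∑ i, A i * (T i - lam i • 1) = 1) ↔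
      (∃ A : Fin d → H →L[ℂ] H,
        ∑ i, A i * (CFC.rpow P t * V i * CFC.rpow P (1 - t) - lam i • 1) = 1) := by
  change IsLeftInvertible (fun i => T i - lam i • 1) ↔
    IsLeftInvertible (fun i => sphericalAluthge V P t i - lam i • 1)
  by_cases hP : IsUnit P
  · obtain ⟨u, hu⟩ := exists_sphericalAluthge_eq_conj hPpos hP hpolar t
    simp only [hu]
    exact (isLeftInvertible_conj_sub_smul_iff u T lam).symm
  by_cases hlam : lam = 0
  · subst hlam
    simp only [Pi.zero_apply, zero_smul, sub_zero]
    exact iff_of_false (fun h => hP (isUnit_mul_self_iff.mp (hP2 ▸ h.isUnit_sum_star_mul_self)))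
      (fun h => hP (isUnit_of_isLeftInvertible_sphericalAluthge hPpos ht1 h))
  obtain ⟨j, hj⟩ := Function.ne_iff.mp hlam
  simp only [isLeftInvertible_iff_jointlyBoundedBelow]
  exact ⟨fun h => h.of_intertwining
      (fun i => mul_mul_rpow_eq_mul_rpow_mul_sphericalAluthge hPpos hcomm hpolar ht0 ht1 i j)
      (mul_assoc _ _ _) hj,
    fun h => h.of_intertwining (sphericalAluthge_mul_rpow hPpos hpolar ht0 ht1.le)
      (eq_mul_rpow_one_sub_mul_rpow hPpos hpolar ht0 ht1.le j) hj⟩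

/-- For `0 ≤ t < 1`: the left (Harte) spectra of `T` and `Δₜ(T)` coincide: `T - λ` is
left invertible iff `Δₜ(T) - λ` is left invertible. -/
theorem left_spectrum_of_spherical_aluthge
    {H : Type*} [NormedAddCommGroup H] [InnerProductSpace ℂ H] [CompleteSpace H]
    {d : ℕ} (hd : 1 ≤ d) (T V : Fin d → H →L[ℂ] H) (P : H →L[ℂ] H)
    (hcomm : ∀ i j, T i * T j = T j * T i)
    (hPpos : 0 ≤ P)
    (hP2 : P * P = ∑ i, star (T i) * T i)
    (hpolar : ∀ i, T i = V i * P)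
    (hproj : ∑ i, star (V i) * V i =
      ((LinearMap.ker (P : H →ₗ[ℂ] H))ᗮ).subtypeL.comp
        (Submodule.orthogonalProjectionOnto (LinearMap.ker (P : H →ₗ[ℂ] H))ᗮ))
    (t : ℝ) (ht0 : 0 ≤ t) (ht1 : t < 1) (lam : Fin d → ℂ) :
    (∃ A : Fin d → H →L[ℂ] H, ∑ i, A i * (T i - lam i • 1) = 1) ↔
      (∃ A : Fin d → H →L[ℂ] H,
        ∑ i, A i * (CFC.rpow P t * V i * CFC.rpow P (1 - t) - lam i • 1) = 1) :=
  left_spectrum_of_spherical_aluthge_general T V P hcomm hPpos hP2 hpolar t ht0 ht1 lam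
end

section
/- Let 0 < t < 1. If the tuple T is right invertible but the tuple Δ_t(T) = (P^t V_1 P^{1−t}, …, P^t V_d P^{1−t}) is not right invertible, then neither T nor Δ_t(T) is left invertible (equivalently, 0 belongs to the left spectrum of both T and Δ_t(T)). -/
/-!
If `P` were invertible, then `P ^ t * V i * P ^ (1 - t) = P ^ t * T i * P ^ (-t)`, so `Δₜ(T)` would
be similar to `T` and inherit its right invertibility; hence `P` is not invertible. On the other
hand, a left inverse of `T = V P` or of `Δₜ(T) = (P ^ t V) P ^ (1 - t)` yields a left inverse of
the self-adjoint operator `P`, respectively `P ^ (1 - t)`, which is then invertible, and so is `P`.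
-/

open Finset

lemma IsSelfAdjoint.isUnit_of_mul_eq_one_s11 {A : Type*} [Monoid A] [StarMul A] {a c : A}
    (ha : IsSelfAdjoint a) (h : c * a = 1) : IsUnit a :=
  isUnit_iff_exists_and_exists.mpr
    ⟨⟨star c, by simpa [ha.star_eq] using congrArg star h⟩, ⟨c, h⟩⟩

section Tuple

variable {A ι : Type*} [Ring A] (s : Finset ι)

lemma IsSelfAdjoint.isUnit_of_sum_mul_mul_eq_one [StarRing A] {q : A} (hq : IsSelfAdjoint q)
    {a x : ι → A} (h : ∑ i ∈ s, a i * (x i * q) = 1) : IsUnit q :=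
  hq.isUnit_of_mul_eq_one_s11 (c := ∑ i ∈ s, a i * x i) <| by
    simpa only [sum_mul, mul_assoc] using h

lemma Units.sum_conj_mul_conj_eq_one (u : Aˣ) {x b : ι → A} (h : ∑ i ∈ s, x i * b i = 1) :
    ∑ i ∈ s, (↑u * x i * ↑u⁻¹) * (↑u * b i * ↑u⁻¹) = 1 := by
  have hterm : ∀ i, (↑u * x i * ↑u⁻¹) * (↑u * b i * ↑u⁻¹) = ↑u * (x i * b i) * ↑u⁻¹ := fun i => by
    simp only [mul_assoc, Units.inv_mul_cancel_left]
  simp only [hterm, ← sum_mul, ← mul_sum, h, mul_one, Units.mul_inv]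

end Tuple

namespace CFC

variable {A : Type*} [PartialOrder A] [Ring A] [StarRing A] [TopologicalSpace A]
  [StarOrderedRing A] [Algebra ℝ A] [ContinuousFunctionalCalculus ℝ A IsSelfAdjoint]
  [NonnegSpectrumClass ℝ A]

lemma rpow_mul_mul_rpow_one_sub {p : A} (hp : IsUnit p) (hp₀ : 0 ≤ p) (v : A) (t : ℝ) :
    p ^ t * v * p ^ (1 - t) = p ^ t * (v * p) * p ^ (-t) := by
  rw [sub_eq_add_neg, rpow_add hp, rpow_one p]
  simp only [mul_assoc]

lemma exists_sum_rpow_mul_mul_rpow_one_sub_mul_eq_one {ι : Type*} (s : Finset ι) {p : A}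
    (hp : IsUnit p) (hp₀ : 0 ≤ p) (t : ℝ) {v b : ι → A}
    (h : ∑ i ∈ s, (v i * p) * b i = 1) :
    ∃ b' : ι → A, ∑ i ∈ s, (p ^ t * v i * p ^ (1 - t)) * b' i = 1 := by
  have hp' : IsStrictlyPositive p := hp.isStrictlyPositive hp₀
  let u : Aˣ := ⟨p ^ t, p ^ (-t), rpow_mul_rpow_neg t, rpow_neg_mul_rpow t⟩
  refine ⟨fun i => p ^ t * b i * p ^ (-t), ?_⟩
  simp only [rpow_mul_mul_rpow_one_sub hp hp₀]
  exact u.sum_conj_mul_conj_eq_one s h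

end CFC

theorem zero_in_left_spectra_of_spherical_aluthge_general
    {H : Type*} [NormedAddCommGroup H] [InnerProductSpace ℂ H] [CompleteSpace H]
    {d : ℕ} (T V : Fin d → H →L[ℂ] H) (P : H →L[ℂ] H)
    (hPpos : 0 ≤ P)
    (hpolar : ∀ i, T i = V i * P)
    (t : ℝ) (ht1 : t < 1)
    (hTright : ∃ B : Fin d → H →L[ℂ] H, ∑ i, T i * B i = 1)
    (hnot : ¬ ∃ B : Fin d → H →L[ℂ] H,
      ∑ i, (CFC.rpow P t * V i * CFC.rpow P (1 - t)) * B i = 1) :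
    (¬ ∃ A : Fin d → H →L[ℂ] H, ∑ i, A i * T i = 1) ∧
    (¬ ∃ A : Fin d → H →L[ℂ] H,
      ∑ i, A i * (CFC.rpow P t * V i * CFC.rpow P (1 - t)) = 1) := by
  have hP_not_isUnit : ¬ IsUnit P := fun hP => by
    obtain ⟨B, hB⟩ := hTright
    simp only [hpolar] at hB
    exact hnot (CFC.exists_sum_rpow_mul_mul_rpow_one_sub_mul_eq_one _ hP hPpos t hB)
  constructor
  · rintro ⟨A, hA⟩
    simp only [hpolar] at hA
    exact hP_not_isUnit ((IsSelfAdjoint.of_nonneg hPpos).isUnit_of_sum_mul_mul_eq_one _ hA)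
  · rintro ⟨A, hA⟩
    have hQ : IsUnit (CFC.rpow P (1 - t)) :=
      (IsSelfAdjoint.of_nonneg CFC.rpow_nonneg).isUnit_of_sum_mul_mul_eq_one _
        (x := fun i => CFC.rpow P t * V i) (by simpa only [mul_assoc] using hA)
    exact hP_not_isUnit ((CFC.isUnit_rpow_iff P (1 - t) (by linarith)).mp hQ)

/-- For `0 < t < 1`: if `T` is right invertible but `Δₜ(T)` is not, then neither `T` nor
`Δₜ(T)` is left invertible. -/
theorem zero_in_left_spectra_of_spherical_aluthge
    {H : Type*} [NormedAddCommGroup H] [InnerProductSpace ℂ H] [CompleteSpace H]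
    {d : ℕ} (hd : 1 ≤ d) (T V : Fin d → H →L[ℂ] H) (P : H →L[ℂ] H)
    (hcomm : ∀ i j, T i * T j = T j * T i)
    (hPpos : 0 ≤ P)
    (hP2 : P * P = ∑ i, star (T i) * T i)
    (hpolar : ∀ i, T i = V i * P)
    (hproj : ∑ i, star (V i) * V i =
      ((LinearMap.ker (P : H →ₗ[ℂ] H))ᗮ).subtypeL.comp
        (Submodule.orthogonalProjectionOnto (LinearMap.ker (P : H →ₗ[ℂ] H))ᗮ))
    (t : ℝ) (ht0 : 0 < t) (ht1 : t < 1)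
    (hTright : ∃ B : Fin d → H →L[ℂ] H, ∑ i, T i * B i = 1)
    (hnot : ¬ ∃ B : Fin d → H →L[ℂ] H,
      ∑ i, (CFC.rpow P t * V i * CFC.rpow P (1 - t)) * B i = 1) :
    (¬ ∃ A : Fin d → H →L[ℂ] H, ∑ i, A i * T i = 1) ∧
    (¬ ∃ A : Fin d → H →L[ℂ] H,
      ∑ i, A i * (CFC.rpow P t * V i * CFC.rpow P (1 - t)) = 1) :=
  zero_in_left_spectra_of_spherical_aluthge_general T V P hPpos hpolar t ht1 hTright hnot
end
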